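/- Suppose Ψ : ℝ × 𝒱 → ℝ is measurable and there exist constants B, K with |Ψ(t,v)| ≤ B and |Ψ(t,v) − Ψ(0,v)| ≤ K·|t| for all (t,v); suppose D : 𝒪 → ℝ is bounded measurable with E_{P₀}[D | 𝒢] = 0 P₀-almost surely; and suppose there is a measurable φ : 𝒱 → ℝ such that φ∘V is a version of E_{P₀}[ D·(s − E_{P₀}[s | 𝒢]) | 𝒢 ] and, for (P₀∘V⁻¹)-almost every v, the map t ↦ Ψ(t,v) is differentiable at t = 0 with derivative φ(v). Define the marginalized parameter Ψ̃(t) := ∫ Ψ(t, V(o)) dP_t(o). Then t ↦ Ψ̃(t) is differentiable at t = 0 and Ψ̃′(0) = ∫ D̃(o)·s(o) dP₀(o), where D̃(o) := D(o) + Ψ(0, V(o)) − Ψ̃(0). Consequently, the function D* of Theorem 1 satisfies D*(o) = D̃(o)·( h(V(o)) − ∫ h(V) dP₀ ) − Ω(0), where Ω(0) := ∫ Ψ(0, V(o))·( h(V(o)) − ∫ h(V) dP₀ ) dP₀(o). -/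

import Mathlib

/-!
Near `t = 0` the density `1 + t·s` is nonnegative, so `Ψ̃(t) = ∫ (1 + t·s)·Ψ(t, V) dP₀`. The
integrand differs from its value at `t = 0` by at most `(S·B + K)·|t|`, so differentiation under
the integral gives `Ψ̃'(0) = ∫ (s·Ψ(0, V) + φ(V)) dP₀`. By the tower property and `E[D | 𝒢] = 0`,
`∫ φ(V) dP₀ = ∫ D·(s − E[s | 𝒢]) dP₀ = ∫ D·s dP₀`, and since `∫ s dP₀ = 0` the constant `Ψ̃(0)`
may be subtracted from `Ψ(0, V)`. The formula for `D*` is algebra once `Ψ̃(0) = ∫ Ψ(0, V) dP₀`.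
-/

open MeasureTheory Filter Topology

theorem hasDerivAt_integral_of_dominated_loc_of_lip' {α : Type*} [MeasurableSpace α]
    {μ : Measure α} {𝕜 : Type*} [RCLike 𝕜] {E : Type*} [NormedAddCommGroup E]
    [NormedSpace ℝ E] [NormedSpace 𝕜 E] [CompleteSpace E]
    {F : 𝕜 → α → E} {F' : α → E} {x₀ : 𝕜} {bound : α → ℝ} {s : Set 𝕜} (hs : s ∈ 𝓝 x₀)
    (hF_meas : ∀ x ∈ s, AEStronglyMeasurable (F x) μ) (hF_int : Integrable (F x₀) μ)
    (hF'_meas : AEStronglyMeasurable F' μ)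
    (h_lipsch : ∀ᵐ a ∂μ, ∀ x ∈ s, ‖F x a - F x₀ a‖ ≤ bound a * ‖x - x₀‖)
    (bound_integrable : Integrable bound μ)
    (h_diff : ∀ᵐ a ∂μ, HasDerivAt (F · a) (F' a) x₀) :
    Integrable F' μ ∧ HasDerivAt (fun x ↦ ∫ a, F x a ∂μ) (∫ a, F' a ∂μ) x₀ := by
  set L := ContinuousLinearMap.toSpanSingletonLIE 𝕜 E
  obtain ⟨hLF'_int, hderiv⟩ := hasFDerivAt_integral_of_dominated_loc_of_lip' hs hF_meas hF_int
    (L.continuous.comp_aestronglyMeasurable hF'_meas) h_lipsch bound_integrable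
    (h_diff.mono fun _ ha => ha.hasFDerivAt)
  refine ⟨L.integrable_comp_iff.mp hLF'_int, hasDerivAt_iff_hasFDerivAt.mpr ?_⟩
  exact hderiv.congr_fderiv (L.toLinearIsometry.integral_comp_comm F')

theorem integral_withDensity_ofReal_eq_integral_mul {X : Type*} [MeasurableSpace X]
    {μ : Measure X} {f : X → ℝ} (hf : AEMeasurable f μ) (hf_nonneg : ∀ᵐ x ∂μ, 0 ≤ f x)
    (g : X → ℝ) :
    ∫ x, g x ∂μ.withDensity (fun x => ENNReal.ofReal (f x)) = ∫ x, f x * g x ∂μ := by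
  rw [integral_withDensity_eq_integral_toReal_smul₀ hf.ennreal_ofReal
    (ae_of_all _ fun _ => ENNReal.ofReal_lt_top)]
  refine integral_congr_ae (hf_nonneg.mono fun x hx => ?_)
  simp [ENNReal.toReal_ofReal hx]

theorem integral_mul_condExp_eq_zero {α : Type*} {m m₀ : MeasurableSpace α} {μ : Measure α}
    (hm : m ≤ m₀) [SigmaFinite (μ.trim hm)] {f g : α → ℝ} (hf : Integrable f μ)
    (hfg : Integrable (fun x => f x * μ[g | m] x) μ) (hf_condExp : μ[f | m] =ᵐ[μ] 0) :
    ∫ x, f x * μ[g | m] x ∂μ = 0 := by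
  have hpull : μ[μ[g | m] * f | m] =ᵐ[μ] 0 := by
    filter_upwards [condExp_mul_of_stronglyMeasurable_left stronglyMeasurable_condExp
      (by rw [mul_comm]; exact hfg) hf, hf_condExp] with x h_pull h_zero
    simp [h_pull, h_zero]
  calc ∫ x, f x * μ[g | m] x ∂μ = ∫ x, μ[μ[g | m] * f | m] x ∂μ := by
        rw [integral_condExp hm]; simp only [Pi.mul_apply, mul_comm]
    _ = 0 := by simp [integral_congr_ae hpull]

theorem integral_mul_sub_condExp_of_condExp_ae_eq_zero {α : Type*} {m m₀ : MeasurableSpace α}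
    {μ : Measure α} [IsFiniteMeasure μ] (hm : m ≤ m₀) {f g : α → ℝ}
    (hf : AEStronglyMeasurable f μ) {C : ℝ} (hf_bdd : ∀ᵐ x ∂μ, ‖f x‖ ≤ C) (hg : Integrable g μ)
    (hf_condExp : μ[f | m] =ᵐ[μ] 0) :
    ∫ x, f x * (g x - μ[g | m] x) ∂μ = ∫ x, f x * g x ∂μ := by
  have hfgc : Integrable (fun x => f x * μ[g | m] x) μ := integrable_condExp.bdd_mul hf hf_bdd
  simp only [mul_sub]
  rw [integral_sub (hg.bdd_mul hf hf_bdd) hfgc,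
    integral_mul_condExp_eq_zero hm (.of_bound hf C hf_bdd) hfgc hf_condExp, sub_zero]

theorem hasDerivAt_integral_withDensity_one_add_mul {X : Type*} [MeasurableSpace X]
    {μ : Measure X} [IsFiniteMeasure μ] {s : X → ℝ} (hs : AEMeasurable s μ) {S : ℝ}
    (hs_bdd : ∀ x, |s x| ≤ S) {G : ℝ → X → ℝ} {G' : X → ℝ}
    (hG_meas : ∀ t, AEStronglyMeasurable (G t) μ) (hG'_meas : AEStronglyMeasurable G' μ)
    {B K : ℝ} (hG_bdd : ∀ t x, |G t x| ≤ B) (hG_lip : ∀ t x, |G t x - G 0 x| ≤ K * |t|)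
    (hG' : ∀ᵐ x ∂μ, HasDerivAt (G · x) (G' x) 0) :
    HasDerivAt (fun t => ∫ x, G t x ∂μ.withDensity (fun x => ENNReal.ofReal (1 + t * s x)))
      (∫ x, s x * G 0 x + G' x ∂μ) 0 := by
  have h_tilt : (fun t => ∫ x, G t x ∂μ.withDensity (fun x => ENNReal.ofReal (1 + t * s x)))
      =ᶠ[𝓝 0] fun t => ∫ x, (1 + t * s x) * G t x ∂μ := by
    have h_small : ∀ᶠ t in 𝓝 (0 : ℝ), |t| * S < 1 :=
      (continuous_abs.mul continuous_const).continuousAt.eventually_lt continuousAt_const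
        (by simp)
    filter_upwards [h_small] with t ht
    refine integral_withDensity_ofReal_eq_integral_mul ((hs.const_mul t).const_add 1)
      (ae_of_all _ fun x => ?_) _
    have : |t * s x| ≤ |t| * S := by
      rw [abs_mul]; exact mul_le_mul_of_nonneg_left (hs_bdd x) (abs_nonneg t)
    linarith [neg_abs_le (t * s x)]
  have h_lip : ∀ t x,
      ‖(1 + t * s x) * G t x - (1 + 0 * s x) * G 0 x‖ ≤ (S * B + K) * ‖t - 0‖ := by
    intro t x
    have h_sG : |s x * G t x| ≤ S * B := by
      rw [abs_mul]
      exact mul_le_mul (hs_bdd x) (hG_bdd t x) (abs_nonneg _) ((abs_nonneg _).trans (hs_bdd x))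
    calc ‖(1 + t * s x) * G t x - (1 + 0 * s x) * G 0 x‖
        = |t * (s x * G t x) + (G t x - G 0 x)| := by rw [Real.norm_eq_abs]; ring_nf
      _ ≤ |t| * (S * B) + K * |t| := by
          refine (abs_add_le _ _).trans (add_le_add ?_ (hG_lip t x))
          rw [abs_mul]; exact mul_le_mul_of_nonneg_left h_sG (abs_nonneg t)
      _ = (S * B + K) * ‖t - 0‖ := by rw [sub_zero, Real.norm_eq_abs]; ring
  have h_diff : ∀ᵐ x ∂μ,
      HasDerivAt (fun t => (1 + t * s x) * G t x) (s x * G 0 x + G' x) 0 := by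
    filter_upwards [hG'] with x hx
    simpa using (((hasDerivAt_id (0 : ℝ)).mul_const (s x)).const_add 1).fun_mul hx
  have h_meas : ∀ t, AEStronglyMeasurable (fun x => (1 + t * s x) * G t x) μ := fun t =>
    ((hs.const_mul t).const_add 1).aestronglyMeasurable.mul (hG_meas t)
  refine (hasDerivAt_integral_of_dominated_loc_of_lip' univ_mem (fun t _ => h_meas t)
    (.of_bound (h_meas 0) B (ae_of_all _ fun x => by simpa using hG_bdd 0 x))
    ((hs.aestronglyMeasurable.mul (hG_meas 0)).add hG'_meas)
    (ae_of_all _ fun x t _ => h_lip t x) (integrable_const _) h_diff).2.congr_of_eventuallyEq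
    h_tilt

theorem stmt2_general
    {𝒰 𝒱 : Type*} [MeasurableSpace 𝒰] [MeasurableSpace 𝒱]
    (P₀ : Measure (𝒰 × 𝒱)) [IsProbabilityMeasure P₀]
    -- the direction `s`: bounded, measurable, mean zero
    (s : 𝒰 × 𝒱 → ℝ) (hs_meas : Measurable s) (S : ℝ) (hs_bdd : ∀ o, |s o| ≤ S)
    (hs_mean : ∫ o, s o ∂P₀ = 0)
    -- the tilted path `P t`
    (P : ℝ → Measure (𝒰 × 𝒱))
    (hP : ∀ t, P t = P₀.withDensity (fun o => ENNReal.ofReal (1 + t * s o)))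
    -- the function `h` in the dual class: bounded and measurable
    (h : 𝒱 → ℝ)
    -- the function-valued parameter `Ψ (t, v) = Ψ_{t,v}`: measurable, bounded, Lipschitz in `t`
    (Ψ : ℝ × 𝒱 → ℝ) (hΨ_meas : Measurable Ψ)
    (B K : ℝ) (hΨ_bdd : ∀ t v, |Ψ (t, v)| ≤ B)
    (hΨ_lip : ∀ t v, |Ψ (t, v) - Ψ (0, v)| ≤ K * |t|)
    -- the conditional influence function `D`: bounded, measurable, conditionally mean zero
    (D : 𝒰 × 𝒱 → ℝ) (hD_meas : Measurable D) (CD : ℝ) (hD_bdd : ∀ o, |D o| ≤ CD)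
    (hD_cond : P₀[D | MeasurableSpace.comap (Prod.snd : 𝒰 × 𝒱 → 𝒱) inferInstance]
      =ᵐ[P₀] 0)
    -- `φ ∘ V` is a version of `E[D·(s − E[s|𝒢]) | 𝒢]`, and `t ↦ Ψ(t,v)` has derivative `φ v` at 0
    (φ : 𝒱 → ℝ) (hφ_meas : Measurable φ)
    (hφ_ver : (fun o => φ o.2)
      =ᵐ[P₀] P₀[fun o => D o *
          (s o - (P₀[s | MeasurableSpace.comap (Prod.snd : 𝒰 × 𝒱 → 𝒱) inferInstance]) o)
        | MeasurableSpace.comap (Prod.snd : 𝒰 × 𝒱 → 𝒱) inferInstance])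
    (hφ_deriv : ∀ᵐ v ∂(P₀.map Prod.snd), HasDerivAt (fun t => Ψ (t, v)) (φ v) 0)
    -- the marginalized parameter `Ψ̃`
    (Ψtilde : ℝ → ℝ) (hΨtilde : ∀ t, Ψtilde t = ∫ o, Ψ (t, o.2) ∂(P t))
    -- its influence function `D̃`
    (Dtilde : 𝒰 × 𝒱 → ℝ) (hDtilde : ∀ o, Dtilde o = D o + Ψ (0, o.2) - Ψtilde 0)
    -- the functional `Ω` along the path and the influence function `D*` of Theorem 1
    (Ω : ℝ → ℝ)
    (Dstar : 𝒰 × 𝒱 → ℝ)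
    (hDstar : ∀ o, Dstar o =
      (D o - (∫ o', Ψ (0, o'.2) ∂P₀) + Ψ (0, o.2)) * (h o.2 - ∫ o', h o'.2 ∂P₀) - Ω 0) :
    HasDerivAt Ψtilde (∫ o, Dtilde o * s o ∂P₀) 0
      ∧ ∀ o, Dstar o = Dtilde o * (h o.2 - ∫ o', h o'.2 ∂P₀) - Ω 0 := by
  have hΨV_meas : ∀ t, Measurable fun o : 𝒰 × 𝒱 => Ψ (t, o.2) := fun t => by fun_prop
  have hs_int : Integrable s P₀ := .of_bound hs_meas.aestronglyMeasurable S (ae_of_all _ hs_bdd)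
  have hDs_int : Integrable (fun o => D o * s o) P₀ :=
    hs_int.bdd_mul hD_meas.aestronglyMeasurable (ae_of_all _ hD_bdd)
  have hsΨ_int : Integrable (fun o => s o * Ψ (0, o.2)) P₀ :=
    hs_int.mul_bdd (hΨV_meas 0).aestronglyMeasurable (ae_of_all _ fun o => hΨ_bdd 0 o.2)
  have hφV_int : Integrable (fun o => φ o.2) P₀ := integrable_condExp.congr hφ_ver.symm
  have hφV : ∫ o, φ o.2 ∂P₀ = ∫ o, D o * s o ∂P₀ := by
    rw [integral_congr_ae hφ_ver, integral_condExp measurable_snd.comap_le,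
      integral_mul_sub_condExp_of_condExp_ae_eq_zero measurable_snd.comap_le
        hD_meas.aestronglyMeasurable (ae_of_all _ hD_bdd) hs_int hD_cond]
  have hΨtilde_eq : Ψtilde = fun t =>
      ∫ o, Ψ (t, o.2) ∂P₀.withDensity (fun o => ENNReal.ofReal (1 + t * s o)) :=
    funext fun t => by rw [hΨtilde, hP]
  have hΨtilde_zero : Ψtilde 0 = ∫ o, Ψ (0, o.2) ∂P₀ := by simp [hΨtilde_eq]
  have hDtilde_s : ∫ o, Dtilde o * s o ∂P₀ = ∫ o, s o * Ψ (0, o.2) + φ o.2 ∂P₀ := calc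
    ∫ o, Dtilde o * s o ∂P₀ = ∫ o, (D o * s o + s o * Ψ (0, o.2)) - Ψtilde 0 * s o ∂P₀ :=
      integral_congr_ae (ae_of_all _ fun o => by dsimp only; rw [hDtilde]; ring)
    _ = ∫ o, D o * s o ∂P₀ + ∫ o, s o * Ψ (0, o.2) ∂P₀ := by
      have hsum_int : Integrable (fun o => D o * s o + s o * Ψ (0, o.2)) P₀ :=
        hDs_int.add hsΨ_int
      rw [integral_sub hsum_int (hs_int.const_mul _), integral_const_mul,
        hs_mean, mul_zero, sub_zero, integral_add hDs_int hsΨ_int]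
    _ = ∫ o, s o * Ψ (0, o.2) + φ o.2 ∂P₀ := by rw [integral_add hsΨ_int hφV_int, hφV, add_comm]
  refine ⟨?_, fun o => by rw [hDstar, hDtilde, hΨtilde_zero]; ring⟩
  rw [hΨtilde_eq, hDtilde_s]
  exact hasDerivAt_integral_withDensity_one_add_mul hs_meas.aemeasurable hs_bdd
    (fun t => (hΨV_meas t).aestronglyMeasurable) (hφ_meas.comp measurable_snd).aestronglyMeasurable
    (fun t o => hΨ_bdd t o.2) (fun t o => hΨ_lip t o.2)
    (ae_of_ae_map measurable_snd.aemeasurable hφ_deriv)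

/-- Paper's Proposition 2: for the marginalized parameter `Ψ̃(t) = ∫ Ψ(t, V) dP_t` along the
tilted path `dP_t = (1 + t·s) dP₀`, `Ψ̃` is differentiable at `0` with derivative
`∫ D̃·s dP₀` where `D̃(o) = D(o) + Ψ(0, V(o)) − Ψ̃(0)`; consequently the efficient influence
function `D*` of Theorem 1 satisfies `D*(o) = D̃(o)·(h(V(o)) − ∫ h(V) dP₀) − Ω(0)`. -/
theorem stmt2
    {𝒰 𝒱 : Type*} [MeasurableSpace 𝒰] [MeasurableSpace 𝒱]
    (P₀ : Measure (𝒰 × 𝒱)) [IsProbabilityMeasure P₀]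
    -- the direction `s`: bounded, measurable, mean zero
    (s : 𝒰 × 𝒱 → ℝ) (hs_meas : Measurable s) (S : ℝ) (hs_bdd : ∀ o, |s o| ≤ S)
    (hs_mean : ∫ o, s o ∂P₀ = 0)
    -- the tilted path `P t`
    (P : ℝ → Measure (𝒰 × 𝒱))
    (hP : ∀ t, P t = P₀.withDensity (fun o => ENNReal.ofReal (1 + t * s o)))
    -- the function `h` in the dual class: bounded and measurable
    (h : 𝒱 → ℝ) (hh_meas : Measurable h) (Ch : ℝ) (hh_bdd : ∀ v, |h v| ≤ Ch)
    -- the function-valued parameter `Ψ (t, v) = Ψ_{t,v}`: measurable, bounded, Lipschitz in `t`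
    (Ψ : ℝ × 𝒱 → ℝ) (hΨ_meas : Measurable Ψ)
    (B K : ℝ) (hΨ_bdd : ∀ t v, |Ψ (t, v)| ≤ B)
    (hΨ_lip : ∀ t v, |Ψ (t, v) - Ψ (0, v)| ≤ K * |t|)
    -- the conditional influence function `D`: bounded, measurable, conditionally mean zero
    (D : 𝒰 × 𝒱 → ℝ) (hD_meas : Measurable D) (CD : ℝ) (hD_bdd : ∀ o, |D o| ≤ CD)
    (hD_cond : P₀[D | MeasurableSpace.comap (Prod.snd : 𝒰 × 𝒱 → 𝒱) inferInstance]
      =ᵐ[P₀] 0)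
    -- `φ ∘ V` is a version of `E[D·(s − E[s|𝒢]) | 𝒢]`, and `t ↦ Ψ(t,v)` has derivative `φ v` at 0
    (φ : 𝒱 → ℝ) (hφ_meas : Measurable φ)
    (hφ_ver : (fun o => φ o.2)
      =ᵐ[P₀] P₀[fun o => D o *
          (s o - (P₀[s | MeasurableSpace.comap (Prod.snd : 𝒰 × 𝒱 → 𝒱) inferInstance]) o)
        | MeasurableSpace.comap (Prod.snd : 𝒰 × 𝒱 → 𝒱) inferInstance])
    (hφ_deriv : ∀ᵐ v ∂(P₀.map Prod.snd), HasDerivAt (fun t => Ψ (t, v)) (φ v) 0)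
    -- the marginalized parameter `Ψ̃`
    (Ψtilde : ℝ → ℝ) (hΨtilde : ∀ t, Ψtilde t = ∫ o, Ψ (t, o.2) ∂(P t))
    -- its influence function `D̃`
    (Dtilde : 𝒰 × 𝒱 → ℝ) (hDtilde : ∀ o, Dtilde o = D o + Ψ (0, o.2) - Ψtilde 0)
    -- the functional `Ω` along the path and the influence function `D*` of Theorem 1
    (Ω : ℝ → ℝ)
    (hΩ : ∀ t, Ω t = ∫ o, Ψ (t, o.2) * (h o.2 - ∫ o', h o'.2 ∂(P t)) ∂(P t))
    (Dstar : 𝒰 × 𝒱 → ℝ)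
    (hDstar : ∀ o, Dstar o =
      (D o - (∫ o', Ψ (0, o'.2) ∂P₀) + Ψ (0, o.2)) * (h o.2 - ∫ o', h o'.2 ∂P₀) - Ω 0) :
    HasDerivAt Ψtilde (∫ o, Dtilde o * s o ∂P₀) 0
      ∧ ∀ o, Dstar o = Dtilde o * (h o.2 - ∫ o', h o'.2 ∂P₀) - Ω 0 :=
  stmt2_general P₀ s hs_meas S hs_bdd hs_mean P hP h Ψ hΨ_meas B K hΨ_bdd hΨ_lip D hD_meas CD hD_bdd
    hD_cond φ hφ_meas hφ_ver hφ_deriv Ψtilde hΨtilde Dtilde hDtilde Ω Dstar hDstar
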